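/- Let K be a field with a surjective discrete valuation ν and valuation ring O, and let C₀ ⊆ ℝⁿ be a rational half-open cone. Let f₁ be a nonzero Laurent polynomial over K with all coefficients in O which is C₀-balanced with initial form init_{C₀}(f₁) = c X^α a single term satisfying ν(c) = 0, and let f₂,…,f_r be arbitrary Laurent polynomials over K. Then for every x ∈ (Kˣ)ⁿ with ν(x) ∈ C₀ ∩ ℤⁿ one has ν(f₁(x)) = ⟨α, ν(x)⟩ = ν((cX^α)(x)); consequently min( ν(f₁(x)), ν(f₂(x)), …, ν(f_r(x)) ) = min( ν((cX^α)(x)), ν(f₂(x)), …, ν(f_r(x)) ). -/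

import Mathlib

noncomputable section

/-- Standard inner product of an integer vector with a real vector. -/
def ipR {n : ℕ} (α : Fin n → ℤ) (ω : Fin n → ℝ) : ℝ := ∑ i, (α i : ℝ) * ω i

/-- Standard inner product of two integer vectors. -/
def ipZ {n : ℕ} (α ω : Fin n → ℤ) : ℤ := ∑ i, α i * ω i

/-- A rational half-open cone in ℝⁿ. -/
def IsRatHalfOpenCone {n : ℕ} (C : Set (Fin n → ℝ)) : Prop :=
  ∃ (d e : ℕ) (φ : Fin d → (Fin n → ℤ)) (χ : Fin e → (Fin n → ℤ)),
    C = {ω | (∀ i, 0 ≤ ipR (φ i) ω) ∧ (∀ j, 0 < ipR (χ j) ω)}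

open scoped Classical in
/-- Initial form `init_ω(f)` of a Laurent polynomial `f` in the direction `ω`. -/
def initForm {K : Type*} [Field K] {n : ℕ} (ω : Fin n → ℝ)
    (f : (Fin n → ℤ) →₀ K) : (Fin n → ℤ) →₀ K :=
  Finsupp.filter (fun α => ∀ β ∈ f.support, ipR α ω ≤ ipR β ω) f

/-- Evaluation of a Laurent polynomial at a point of the torus `(Kˣ)ⁿ`. -/
def evalL {K : Type*} [Field K] {n : ℕ} (f : (Fin n → ℤ) →₀ K) (x : Fin n → Kˣ) : K :=
  ∑ α ∈ f.support, f α * ∏ i, ((x i ^ (α i) : Kˣ) : K)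

/-! At `ω = ν(x) ∈ C₀` the initial form of `f₁` is `c X^α`, so `⟨α, ω⟩ < ⟨β, ω⟩` for every other
exponent `β` of `f₁`. Since the coefficients of `f₁` are integral and `ν(c) = 0`, the term
`c x^α` has strictly smaller valuation than every other term of `f₁(x)`, and by the ultrametric
inequality it alone determines `ν(f₁(x)) = ⟨α, ω⟩`. -/

open Finset

theorem ipR_intCast {n : ℕ} (β ω : Fin n → ℤ) :
    ipR β (fun i => (ω i : ℝ)) = ipZ β ω := by
  simp [ipR, ipZ]

theorem evalL_single {K : Type*} [Field K] {n : ℕ} (α : Fin n → ℤ) (c : K) (x : Fin n → Kˣ) :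
    evalL (Finsupp.single α c) x = c * ∏ i, ((x i ^ α i : Kˣ) : K) := by
  change (Finsupp.single α c).sum (fun β a => a * ∏ i, ((x i ^ β i : Kˣ) : K)) = _
  exact Finsupp.sum_single_index (zero_mul _)

section initForm

variable {K : Type*} [Field K] {n : ℕ} {ω : Fin n → ℝ} {f : (Fin n → ℤ) →₀ K}
  {α : Fin n → ℤ} {c : K}

open scoped Classical in
theorem mem_support_initForm :
    α ∈ (initForm ω f).support ↔ α ∈ f.support ∧ ∀ β ∈ f.support, ipR α ω ≤ ipR β ω := by
  rw [initForm, Finsupp.support_filter, Finset.mem_filter]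

theorem apply_eq_of_initForm_eq_single (h : initForm ω f = Finsupp.single α c) (hc : c ≠ 0) :
    f α = c := by
  have hα : α ∈ (initForm ω f).support := by simp [h, hc]
  rw [← Finsupp.single_eq_same (a := α) (b := c), ← h]
  exact (Finsupp.filter_apply_pos _ _ (mem_support_initForm.mp hα).2).symm

theorem ipR_lt_of_initForm_eq_single (h : initForm ω f = Finsupp.single α c) (hc : c ≠ 0)
    {β : Fin n → ℤ} (hβ : β ∈ f.support) (hne : β ≠ α) : ipR α ω < ipR β ω := by
  have hα : α ∈ (initForm ω f).support := by simp [h, hc]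
  have hβ' : β ∉ (initForm ω f).support := by simp [h, hne]
  rw [mem_support_initForm] at hα hβ'
  push Not at hβ'
  obtain ⟨γ, hγ, hγβ⟩ := hβ' hβ
  exact (hα.2 γ hγ).trans_lt hγβ

end initForm

namespace AddValuation

variable {K : Type*} [Field K]

theorem map_units_zpow_of_eq {G : Type*} [AddCommGroup G] [LinearOrder G] [IsOrderedAddMonoid G]
    (v : AddValuation K (WithTop G)) {u : Kˣ} {a : G} (hu : v (u : K) = a) (k : ℤ) :
    v ((u ^ k : Kˣ) : K) = ((k • a : G) : WithTop G) := by
  induction k using Int.induction_on with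
  | zero => simp
  | succ k ih =>
    rw [zpow_add_one, Units.val_mul, v.map_mul, ih, hu, ← WithTop.coe_add, add_zsmul, one_zsmul]
  | pred k ih =>
    rw [zpow_sub_one, Units.val_mul, Units.val_inv_eq_inv_val, v.map_mul, v.map_inv, ih, hu,
      ← WithTop.LinearOrderedAddCommGroup.coe_neg, ← WithTop.coe_add, sub_zsmul, one_zsmul]

theorem map_monomial (v : AddValuation K (WithTop ℤ)) {n : ℕ} {x : Fin n → Kˣ} {ω : Fin n → ℤ}
    (hx : ∀ i, v (x i : K) = ω i) (β : Fin n → ℤ) :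
    v (∏ i, ((x i ^ β i : Kˣ) : K)) = ipZ β ω := by
  suffices ∀ s : Finset (Fin n),
      v (∏ i ∈ s, ((x i ^ β i : Kˣ) : K)) = ((∑ i ∈ s, β i * ω i : ℤ) : WithTop ℤ) from this _
  intro s
  induction s using Finset.cons_induction with
  | empty => simp
  | cons i s hi ih =>
    rw [prod_cons, sum_cons, v.map_mul, ih, v.map_units_zpow_of_eq (hx i), smul_eq_mul,
      WithTop.coe_add]

theorem map_evalL_of_dominant {Γ₀ : Type*} [LinearOrderedAddCommMonoidWithTop Γ₀] [Nontrivial Γ₀]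
    (v : AddValuation K Γ₀) {n : ℕ} {f : (Fin n → ℤ) →₀ K} {x : Fin n → Kˣ} {α : Fin n → ℤ}
    (hα : α ∈ f.support)
    (hdom : ∀ β ∈ f.support, β ≠ α →
      v (f α * ∏ i, ((x i ^ α i : Kˣ) : K)) < v (f β * ∏ i, ((x i ^ β i : Kˣ) : K))) :
    v (evalL f x) = v (f α * ∏ i, ((x i ^ α i : Kˣ) : K)) := by
  have hne_top : v (f α * ∏ i, ((x i ^ α i : Kˣ) : K)) ≠ ⊤ :=
    v.ne_top_iff.mpr <| mul_ne_zero (Finsupp.mem_support_iff.mp hα) <|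
      prod_ne_zero_iff.mpr fun i _ => Units.ne_zero _
  rw [evalL, ← add_sum_erase _ _ hα]
  exact v.map_add_eq_of_lt_left <| v.map_lt_sum hne_top fun β hβ =>
    hdom β (mem_of_mem_erase hβ) (ne_of_mem_erase hβ)

end AddValuation

theorem valuation_replace_balanced_by_term_general {K : Type*} [Field K] {n r : ℕ}
    (v : AddValuation K (WithTop ℤ))
    (C : Set (Fin n → ℝ))
    (f₁ : (Fin n → ℤ) →₀ K)
    (hcoeff : ∀ β, 0 ≤ v (f₁ β))
    (α : Fin n → ℤ) (c : K) (hc : v c = (0 : WithTop ℤ))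
    (hinit : ∀ ωr ∈ C, initForm ωr f₁ = Finsupp.single α c)
    (g : Fin r → ((Fin n → ℤ) →₀ K))
    (x : Fin n → Kˣ) (ω : Fin n → ℤ)
    (hx : ∀ i, v ((x i : K)) = (ω i : WithTop ℤ))
    (hω : (fun i => (ω i : ℝ)) ∈ C) :
    v (evalL f₁ x) = (ipZ α ω : WithTop ℤ) ∧
    v (evalL f₁ x) = v (evalL (Finsupp.single α c) x) ∧
    min (v (evalL f₁ x)) (Finset.univ.inf fun i => v (evalL (g i) x))
      = min (v (evalL (Finsupp.single α c) x))
          (Finset.univ.inf fun i => v (evalL (g i) x)) := by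
  have hc0 : c ≠ 0 := by
    rintro rfl
    simp at hc
  have hinitω := hinit _ hω
  have hfα : f₁ α = c := apply_eq_of_initForm_eq_single hinitω hc0
  have hterm (β : Fin n → ℤ) :
      v (f₁ β * ∏ i, ((x i ^ β i : Kˣ) : K)) = v (f₁ β) + ipZ β ω := by
    rw [v.map_mul, v.map_monomial hx]
  have hval : v (evalL f₁ x) = ipZ α ω := by
    rw [v.map_evalL_of_dominant (Finsupp.mem_support_iff.mpr (hfα ▸ hc0)), hterm, hfα, hc, zero_add]
    intro β hβ hne
    have hlt : ipZ α ω < ipZ β ω := by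
      have := ipR_lt_of_initForm_eq_single hinitω hc0 hβ hne
      rwa [ipR_intCast, ipR_intCast, Int.cast_lt] at this
    rw [hterm, hterm, hfα, hc, zero_add]
    exact (WithTop.coe_lt_coe.mpr hlt).trans_le (le_add_of_nonneg_left (hcoeff β))
  have hval_single : v (evalL (Finsupp.single α c) x) = ipZ α ω := by
    rw [evalL_single, v.map_mul, hc, zero_add, v.map_monomial hx]
  exact ⟨hval, hval.trans hval_single.symm, by rw [hval, hval_single]⟩

/-- Lemma 6.3(S3): if `f₁` is `C₀`-balanced with initial form on `C₀` a single
term `c X^α`, `ν(c) = 0`, and `f₁` has coefficients in the valuation ring, then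
for `x ∈ (Kˣ)ⁿ` with `ν(x) ∈ C₀ ∩ ℤⁿ` one has
`ν(f₁(x)) = ⟨α, ν(x)⟩ = ν((c X^α)(x))`; consequently the minimum of the
valuations `ν(f₁(x)), ν(f₂(x)), …, ν(f_r(x))` is unchanged upon replacing `f₁`
by `c X^α`. -/
theorem valuation_replace_balanced_by_term {K : Type*} [Field K] {n r : ℕ}
    (v : AddValuation K (WithTop ℤ))
    (hsurj : ∀ m : ℤ, ∃ y : K, v y = (m : WithTop ℤ))
    (hker : ∀ y : K, v y = ⊤ → y = 0)
    (C : Set (Fin n → ℝ)) (hC : IsRatHalfOpenCone C)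
    (f₁ : (Fin n → ℤ) →₀ K) (hf₁ : f₁ ≠ 0)
    (hcoeff : ∀ β, 0 ≤ v (f₁ β))
    (α : Fin n → ℤ) (c : K) (hc : v c = (0 : WithTop ℤ))
    (hinit : ∀ ωr ∈ C, initForm ωr f₁ = Finsupp.single α c)
    (g : Fin r → ((Fin n → ℤ) →₀ K))
    (x : Fin n → Kˣ) (ω : Fin n → ℤ)
    (hx : ∀ i, v ((x i : K)) = (ω i : WithTop ℤ))
    (hω : (fun i => (ω i : ℝ)) ∈ C) :
    v (evalL f₁ x) = (ipZ α ω : WithTop ℤ) ∧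
    v (evalL f₁ x) = v (evalL (Finsupp.single α c) x) ∧
    min (v (evalL f₁ x)) (Finset.univ.inf fun i => v (evalL (g i) x))
      = min (v (evalL (Finsupp.single α c) x))
          (Finset.univ.inf fun i => v (evalL (g i) x)) :=
  valuation_replace_balanced_by_term_general v C f₁ hcoeff α c hc hinit g x ω hx hω
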